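/- arXiv:math/0609405 — 2 statements merged into one kernel-verified Lean document; each statement's English description precedes it below -/
import Mathlib

section
/- If a skew Young diagram θ is a horizontal N-ribbon strip of weight k (i.e., it admits a tiling by k ribbons of length N whose origins lie in the horizontal strip θ↓ of bottom nodes of the columns of θ), then this tiling is unique. -/
/-- `R` is a ribbon of length `N` with origin `o`: its cells form a path starting at the
south-west-most box `o`, each step going either east or north.  (Rows are indexed downwards,
as for `YoungDiagram`; such a path is connected, has `N` boxes and contains no 2×2 square.) -/
def IsRibbon (N : ℕ) (o : ℕ × ℕ) (R : Finset (ℕ × ℕ)) : Prop :=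
  ∃ f : ℕ → ℕ × ℕ,
    f 0 = o ∧
    R = (Finset.range N).image f ∧
    R.card = N ∧
    ∀ k, k + 1 < N →
      (f (k + 1) = ((f k).1, (f k).2 + 1) ∨
        (0 < (f k).1 ∧ f (k + 1) = ((f k).1 - 1, (f k).2)))

/-- `T` is a tiling of the skew diagram `θ` by `N`-ribbons whose origins lie in `θ↓`
(the set of bottom-most cells of the columns of `θ`). -/
def IsHorizontalRibbonTiling (N : ℕ) (θ : Finset (ℕ × ℕ)) (T : Finset (Finset (ℕ × ℕ))) :
    Prop :=
  (∀ R ∈ T, ∃ o : ℕ × ℕ, IsRibbon N o R ∧ o ∈ θ ∧ (o.1 + 1, o.2) ∉ θ) ∧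
  (∀ R ∈ T, ∀ R' ∈ T, R ≠ R' → Disjoint R R') ∧
  T.sup id = θ

namespace RibbonAux

/-- content of a cell -/
def ct (x : ℕ × ℕ) : ℤ := (x.2 : ℤ) - (x.1 : ℤ)

lemma eq_of_ct_row {x y : ℕ × ℕ} (hc : ct x = ct y) (hr : x.1 = y.1) : x = y := by
  obtain ⟨a, b⟩ := x; obtain ⟨c, d⟩ := y
  simp only [ct] at hc
  simp only [Prod.mk.injEq] at *
  omega

def RectClosed (θ : Finset (ℕ × ℕ)) : Prop :=
  ∀ ⦃i1 j1 i2 j2 : ℕ⦄, (i1, j1) ∈ θ → (i2, j2) ∈ θ → i1 ≤ i2 → j1 ≤ j2 → (i2, j1) ∈ θ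

def ColContig (θ : Finset (ℕ × ℕ)) : Prop :=
  ∀ ⦃i m i' j : ℕ⦄, (i, j) ∈ θ → (i', j) ∈ θ → i ≤ m → m ≤ i' → (m, j) ∈ θ

def StepOK (N : ℕ) (f : ℕ → ℕ × ℕ) : Prop :=
  ∀ k, k + 1 < N →
      (f (k + 1) = ((f k).1, (f k).2 + 1) ∨
        (0 < (f k).1 ∧ f (k + 1) = ((f k).1 - 1, (f k).2)))

lemma step_bounds {N : ℕ} {f : ℕ → ℕ × ℕ} (hs : StepOK N f) {k : ℕ} (hk : k + 1 < N) :
    (f (k + 1)).1 ≤ (f k).1 ∧ (f k).1 ≤ (f (k + 1)).1 + 1 ∧ (f k).2 ≤ (f (k + 1)).2 ∧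
      ct (f (k + 1)) = ct (f k) + 1 := by
  rcases hs k hk with h | ⟨hpos, h⟩ <;> rw [h] <;> simp [ct] <;> omega

lemma ct_f {N : ℕ} {f : ℕ → ℕ × ℕ} (hs : StepOK N f) :
    ∀ k, k < N → ct (f k) = ct (f 0) + k := by
  intro k
  induction k with
  | zero => simp
  | succ n ih =>
    intro h
    have hb := step_bounds hs h
    rw [hb.2.2.2, ih (by omega)]
    push_cast; ring

lemma f_mono {N : ℕ} {f : ℕ → ℕ × ℕ} (hs : StepOK N f) {k l : ℕ} (hkl : k ≤ l) (hl : l < N) :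
    (f l).1 ≤ (f k).1 ∧ (f k).2 ≤ (f l).2 := by
  induction l, hkl using Nat.le_induction with
  | base => exact ⟨le_rfl, le_rfl⟩
  | succ n hn ih =>
    have hb := step_bounds hs hl
    have h2 := ih (by omega)
    exact ⟨le_trans hb.1 h2.1, le_trans h2.2 hb.2.2.1⟩

lemma mem_ribbon {N : ℕ} {f : ℕ → ℕ × ℕ} {R : Finset (ℕ × ℕ)}
    (hfim : R = (Finset.range N).image f) {x : ℕ × ℕ} (hx : x ∈ R) :
    ∃ k, k < N ∧ f k = x := by
  rw [hfim] at hx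
  simpa using hx

lemma ribbon_mem {N : ℕ} {f : ℕ → ℕ × ℕ} {R : Finset (ℕ × ℕ)}
    (hfim : R = (Finset.range N).image f) {k : ℕ} (hk : k < N) : f k ∈ R := by
  rw [hfim]
  exact Finset.mem_image.mpr ⟨k, Finset.mem_range.mpr hk, rfl⟩

/-- the bottom-origin contradiction helper: a cell strictly below the origin's row,
weakly right of its column, contradicts the origin being a column bottom. -/
lemma aux_bot {θ : Finset (ℕ × ℕ)} (hrect : RectClosed θ) (hcontig : ColContig θ)
    {o x : ℕ × ℕ} (hoθ : o ∈ θ) (hbot : (o.1 + 1, o.2) ∉ θ) (hxθ : x ∈ θ)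
    (h1 : o.1 < x.1) (h2 : o.2 ≤ x.2) : False := by
  have ho' : (o.1, o.2) ∈ θ := by simpa using hoθ
  have hx' : (x.1, x.2) ∈ θ := by simpa using hxθ
  have h3 : (x.1, o.2) ∈ θ := hrect ho' hx' (le_of_lt h1) h2
  exact hbot (hcontig ho' h3 (by omega) (by omega))


/-- Ordering lemma: if two disjoint ribbons in a tiling have origin contents
`ct o < ct o'`, then on every common diagonal the cell of the first ribbon lies
strictly above (smaller row than) the cell of the second. -/
lemma star {θ : Finset (ℕ × ℕ)} (hrect : RectClosed θ) (hcontig : ColContig θ)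
    {N : ℕ} {R R' : Finset (ℕ × ℕ)} {o o' : ℕ × ℕ} {f f' : ℕ → ℕ × ℕ}
    (hRθ : R ⊆ θ)
    (hdisj : Disjoint R R')
    (hf0 : f 0 = o) (hfim : R = (Finset.range N).image f) (hfs : StepOK N f)
    (hf0' : f' 0 = o') (hfim' : R' = (Finset.range N).image f') (hfs' : StepOK N f')
    (ho'θ : o' ∈ θ) (hbot' : (o'.1 + 1, o'.2) ∉ θ)
    (hoo' : ct o < ct o') :
    ∀ k', k' < N → ∀ x ∈ R, ct x = ct o' + k' → x.1 < (f' k').1 := by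
  intro k'
  induction k' with
  | zero =>
    intro hk' x hx hctx
    rw [hf0']
    simp only [Nat.cast_zero, add_zero] at hctx
    by_contra hle
    push_neg at hle
    have hxne : x ≠ o' := by
      intro he
      have ho'R' : o' ∈ R' := hf0' ▸ ribbon_mem hfim' hk'
      exact Finset.disjoint_left.mp hdisj hx (he ▸ ho'R')
    have h1 : o'.1 < x.1 := by
      rcases lt_or_eq_of_le hle with h | h
      · exact h
      · exact absurd (eq_of_ct_row hctx h.symm) hxne
    have h2 : o'.2 ≤ x.2 := by
      simp only [ct] at hctx; omega
    exact absurd (aux_bot hrect hcontig ho'θ hbot' (hRθ hx) h1 h2) (by simp)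
  | succ n ih =>
    intro hk' x hx hctx
    obtain ⟨k, hkN, hfk⟩ := mem_ribbon hfim hx
    have hctk : ct (f k) = ct o + k := by rw [ct_f hfs k hkN, hf0]
    rw [hfk] at hctk
    have hk1 : 1 ≤ k := by
      by_contra h
      push_neg at h
      interval_cases k
      · simp at hctk; omega
    obtain ⟨m, rfl⟩ : ∃ m, k = m + 1 := ⟨k - 1, by omega⟩
    have hmN : m < N := by omega
    have hpR : f m ∈ R := ribbon_mem hfim hmN
    have hctp : ct (f m) = ct o' + n := by
      have : ct (f m) = ct o + m := by rw [ct_f hfs m hmN, hf0]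
      push_cast at hctk hctx this ⊢
      omega
    have hihp := ih (by omega) (f m) hpR hctp
    have hb := step_bounds hfs (show m + 1 < N from hkN)
    have hb' := step_bounds hfs' hk'
    rw [hfk] at hb
    -- x.1 ≤ p.1 < (f' n).1 ≤ (f' (n+1)).1 + 1
    have hq' : ct (f' (n + 1)) = ct o' + (n + 1) := by
      rw [ct_f hfs' (n + 1) hk', hf0']; push_cast; ring
    have hne : x ≠ f' (n + 1) := by
      intro he
      exact Finset.disjoint_left.mp hdisj hx (he ▸ ribbon_mem hfim' hk')
    have hrne : x.1 ≠ (f' (n + 1)).1 := by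
      intro he
      exact hne (eq_of_ct_row (by push_cast at hctx hq' ⊢; omega) he)
    omega


lemma tile_subset {N : ℕ} {θ : Finset (ℕ × ℕ)} {T : Finset (Finset (ℕ × ℕ))}
    (hT : IsHorizontalRibbonTiling N θ T) {R : Finset (ℕ × ℕ)} (hR : R ∈ T) : R ⊆ θ := by
  have h := Finset.le_sup (f := id) hR
  rw [hT.2.2] at h
  exact h

lemma tile_cover {N : ℕ} {θ : Finset (ℕ × ℕ)} {T : Finset (Finset (ℕ × ℕ))}
    (hT : IsHorizontalRibbonTiling N θ T) {x : ℕ × ℕ} (hx : x ∈ θ) : ∃ R ∈ T, x ∈ R := by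
  rw [← hT.2.2] at hx
  exact Finset.mem_sup.mp hx

lemma tile_eq {N : ℕ} {θ : Finset (ℕ × ℕ)} {T : Finset (Finset (ℕ × ℕ))}
    (hT : IsHorizontalRibbonTiling N θ T) {R R' : Finset (ℕ × ℕ)} (hR : R ∈ T) (hR' : R' ∈ T)
    {x : ℕ × ℕ} (hx : x ∈ R) (hx' : x ∈ R') : R = R' := by
  by_contra h
  exact Finset.disjoint_left.mp (hT.2.1 R hR R' hR' h) hx hx'

/-- distinct ribbons in a tiling have origins of distinct contents -/
lemma origin_ct_ne {θ : Finset (ℕ × ℕ)} (hrect : RectClosed θ) (hcontig : ColContig θ)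
    {R R' : Finset (ℕ × ℕ)} {o o' : ℕ × ℕ}
    (hdisj : Disjoint R R') (ho : o ∈ R) (ho' : o' ∈ R')
    (hoθ : o ∈ θ) (hbot : (o.1 + 1, o.2) ∉ θ) (ho'θ : o' ∈ θ) (hbot' : (o'.1 + 1, o'.2) ∉ θ) :
    ct o ≠ ct o' := by
  intro h
  have hne : o ≠ o' := fun he => Finset.disjoint_left.mp hdisj ho (he ▸ ho')
  rcases lt_trichotomy o.1 o'.1 with h1 | h1 | h1
  · have h2 : o.2 ≤ o'.2 := by simp only [ct] at h; omega
    exact aux_bot hrect hcontig hoθ hbot ho'θ h1 h2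
  · exact hne (eq_of_ct_row h h1)
  · have h2 : o'.2 ≤ o.2 := by simp only [ct] at h; omega
    exact aux_bot hrect hcontig ho'θ hbot' hoθ h1 h2

/-- data of a ribbon in a tiling whose origin content is maximal -/
structure MaxRib (N : ℕ) (θ : Finset (ℕ × ℕ)) (T : Finset (Finset (ℕ × ℕ))) where
  R : Finset (ℕ × ℕ)
  o : ℕ × ℕ
  f : ℕ → ℕ × ℕ
  hR : R ∈ T
  hf0 : f 0 = o
  hfim : R = (Finset.range N).image f
  hfs : StepOK N f
  hoθ : o ∈ θ
  hbot : (o.1 + 1, o.2) ∉ θ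
  hmax : ∀ y ∈ θ, ct y ≤ ct o + (N - 1 : ℕ)

lemma exists_maxrib {N : ℕ} (hN : 0 < N) {θ : Finset (ℕ × ℕ)} {T : Finset (Finset (ℕ × ℕ))}
    (hT : IsHorizontalRibbonTiling N θ T) (hθ : θ.Nonempty) :
    Nonempty (MaxRib N θ T) := by
  set M := (θ.image ct).max' (hθ.image ct) with hM
  have hMmem : M ∈ θ.image ct := Finset.max'_mem _ _
  obtain ⟨x, hxθ, hxM⟩ := Finset.mem_image.mp hMmem
  obtain ⟨R, hR, hxR⟩ := tile_cover hT hxθ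
  obtain ⟨o, ⟨f, hf0, hfim, hcard, hfs⟩, hoθ, hbot⟩ := hT.1 R hR
  obtain ⟨k, hkN, hfk⟩ := mem_ribbon hfim hxR
  have hctk : ct x = ct o + k := by rw [← hfk, ct_f hfs k hkN, hf0]
  have hle : ∀ y ∈ θ, ct y ≤ M := fun y hy =>
    Finset.le_max' _ _ (Finset.mem_image_of_mem ct hy)
  have hkeq : k = N - 1 := by
    by_contra h
    have hk1 : k + 1 < N := by omega
    have h2 : f (k + 1) ∈ θ := tile_subset hT hR (ribbon_mem hfim hk1)
    have h3 : ct (f (k + 1)) = ct x + 1 := by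
      rw [← hfk]
      exact (step_bounds hfs hk1).2.2.2
    have := hle _ h2
    omega
  refine ⟨⟨R, o, f, hR, hf0, hfim, hfs, hoθ, hbot, ?_⟩⟩
  intro y hy
  have := hle y hy
  subst hkeq
  omega

/-- the cell of the maximal ribbon on each diagonal it meets is the lowest cell of θ
on that diagonal -/
lemma maxrib_lowest {N : ℕ} (hN : 0 < N) {θ : Finset (ℕ × ℕ)}
    (hrect : RectClosed θ) (hcontig : ColContig θ)
    {T : Finset (Finset (ℕ × ℕ))} (hT : IsHorizontalRibbonTiling N θ T)
    (D : MaxRib N θ T) :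
    ∀ k, k < N → ∀ y ∈ θ, ct y = ct D.o + k → y.1 ≤ (D.f k).1 := by
  intro k hk y hyθ hcty
  obtain ⟨R', hR', hyR'⟩ := tile_cover hT hyθ
  by_cases hRR : R' = D.R
  · subst hRR
    obtain ⟨k'', hk''N, hfk''⟩ := mem_ribbon D.hfim hyR'
    have h1 : ct y = ct D.o + k'' := by rw [← hfk'', ct_f D.hfs k'' hk''N, D.hf0]
    have : k'' = k := by omega
    subst this
    rw [← hfk'']
  · obtain ⟨o'', ⟨f'', hf0'', hfim'', hcard'', hfs''⟩, ho''θ, hbot''⟩ := hT.1 R' hR'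
    have hdisj : Disjoint R' D.R := hT.2.1 R' hR' D.R D.hR hRR
    have hne : ct o'' ≠ ct D.o :=
      origin_ct_ne hrect hcontig hdisj (hf0'' ▸ ribbon_mem hfim'' hN)
        (D.hf0 ▸ ribbon_mem D.hfim hN) ho''θ hbot'' D.hoθ D.hbot
    have hterm : f'' (N - 1) ∈ θ := tile_subset hT hR' (ribbon_mem hfim'' (by omega))
    have hctterm : ct (f'' (N - 1)) = ct o'' + (N - 1 : ℕ) := by
      rw [ct_f hfs'' _ (by omega), hf0'']
    have hlt : ct o'' < ct D.o := by
      have := D.hmax _ hterm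
      omega
    exact le_of_lt (star hrect hcontig (tile_subset hT hR') hdisj hf0'' hfim'' hfs''
      D.hf0 D.hfim D.hfs D.hoθ D.hbot hlt k hk y hyR' hcty)


/-- maximal ribbons of two tilings of the same shape coincide -/
lemma maxrib_eq {N : ℕ} (hN : 0 < N) {θ : Finset (ℕ × ℕ)}
    (hrect : RectClosed θ) (hcontig : ColContig θ)
    {T₁ T₂ : Finset (Finset (ℕ × ℕ))}
    (hT₁ : IsHorizontalRibbonTiling N θ T₁) (hT₂ : IsHorizontalRibbonTiling N θ T₂)
    (D₁ : MaxRib N θ T₁) (D₂ : MaxRib N θ T₂) : D₁.R = D₂.R := by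
  have e1 : ct (D₁.f (N - 1)) = ct D₁.o + (N - 1 : ℕ) := by
    rw [ct_f D₁.hfs _ (by omega), D₁.hf0]
  have e2 : ct (D₂.f (N - 1)) = ct D₂.o + (N - 1 : ℕ) := by
    rw [ct_f D₂.hfs _ (by omega), D₂.hf0]
  have hct : ct D₁.o = ct D₂.o := by
    have h1 := D₂.hmax _ (tile_subset hT₁ D₁.hR (ribbon_mem D₁.hfim (show N - 1 < N by omega)))
    have h2 := D₁.hmax _ (tile_subset hT₂ D₂.hR (ribbon_mem D₂.hfim (show N - 1 < N by omega)))
    omega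
  have hfeq : ∀ j, j < N → D₁.f j = D₂.f j := by
    intro j hj
    have c1 : ct (D₁.f j) = ct D₁.o + j := by rw [ct_f D₁.hfs _ hj, D₁.hf0]
    have c2 : ct (D₂.f j) = ct D₂.o + j := by rw [ct_f D₂.hfs _ hj, D₂.hf0]
    have l1 := maxrib_lowest hN hrect hcontig hT₂ D₂ j hj (D₁.f j)
      (tile_subset hT₁ D₁.hR (ribbon_mem D₁.hfim hj)) (by omega)
    have l2 := maxrib_lowest hN hrect hcontig hT₁ D₁ j hj (D₂.f j)
      (tile_subset hT₂ D₂.hR (ribbon_mem D₂.hfim hj)) (by omega)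
    exact eq_of_ct_row (by omega) (le_antisymm l1 l2)
  rw [D₁.hfim, D₂.hfim]
  apply Finset.image_congr
  intro j hj
  exact hfeq j (Finset.mem_range.mp (by simpa using hj))

/-- every cell of θ strictly below a cell of the maximal ribbon, in the same column,
belongs to the maximal ribbon -/
lemma below_mem {N : ℕ} (hN : 0 < N) {θ : Finset (ℕ × ℕ)}
    (hrect : RectClosed θ) (hcontig : ColContig θ)
    {T : Finset (Finset (ℕ × ℕ))} (hT : IsHorizontalRibbonTiling N θ T)
    (D : MaxRib N θ T) :
    ∀ k, k < N → ∀ y ∈ θ, y.2 = (D.f k).2 → (D.f k).1 < y.1 → y ∈ D.R := by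
  intro k hk y hyθ hcol hrow
  have hctk : ct (D.f k) = ct D.o + k := by rw [ct_f D.hfs _ hk, D.hf0]
  have hcty : ct y < ct (D.f k) := by simp only [ct] at *; omega
  by_cases hc : ct D.o ≤ ct y
  · set k'' := (ct y - ct D.o).toNat with hk''def
    have hk''eq : (k'' : ℤ) = ct y - ct D.o := Int.toNat_of_nonneg (by omega)
    have hk''N : k'' < N := by omega
    have hk''k : k'' ≤ k := by omega
    have hl := maxrib_lowest hN hrect hcontig hT D k'' hk''N y hyθ (by omega)
    have hm := (f_mono D.hfs hk''k hk).2
    have hctk'' : ct (D.f k'') = ct D.o + k'' := by rw [ct_f D.hfs _ hk''N, D.hf0]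
    have hrow2 : (D.f k'').1 ≤ y.1 := by
      simp only [ct] at hctk'' hctk hcty hk''eq; omega
    have hy : y = D.f k'' :=
      eq_of_ct_row (show ct y = ct (D.f k'') by
        simp only [ct] at hctk'' hk''eq ⊢; omega) (le_antisymm hl hrow2)
    rw [hy]
    exact ribbon_mem D.hfim hk''N
  · exfalso
    have ho2 : D.o.2 ≤ y.2 := by
      have := (f_mono D.hfs (Nat.zero_le k) hk).2
      rw [D.hf0] at this
      omega
    have ho1 : D.o.1 < y.1 := by simp only [ct] at *; omega
    exact aux_bot hrect hcontig D.hoθ D.hbot hyθ ho1 ho2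


lemma contig_sdiff {N : ℕ} (hN : 0 < N) {θ : Finset (ℕ × ℕ)}
    (hrect : RectClosed θ) (hcontig : ColContig θ)
    {T : Finset (Finset (ℕ × ℕ))} (hT : IsHorizontalRibbonTiling N θ T)
    (D : MaxRib N θ T) : ColContig (θ \ D.R) := by
  intro i m i' j h1 h2 him hmi'
  rw [Finset.mem_sdiff] at h1 h2 ⊢
  have hmθ : (m, j) ∈ θ := hcontig h1.1 h2.1 him hmi'
  refine ⟨hmθ, fun hmem => ?_⟩
  obtain ⟨k, hkN, hfk⟩ := mem_ribbon D.hfim hmem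
  rcases eq_or_lt_of_le hmi' with he | hlt
  · exact h2.2 (he ▸ hmem)
  · exact h2.2 (below_mem hN hrect hcontig hT D k hkN (i', j) h2.1
      (by rw [hfk]) (by rw [hfk]; exact hlt))

lemma rect_sdiff {N : ℕ} (hN : 0 < N) {θ : Finset (ℕ × ℕ)}
    (hrect : RectClosed θ) (hcontig : ColContig θ)
    {T : Finset (Finset (ℕ × ℕ))} (hT : IsHorizontalRibbonTiling N θ T)
    (D : MaxRib N θ T) : RectClosed (θ \ D.R) := by
  intro i1 j1 i2 j2 h1 h2 hi hj
  rw [Finset.mem_sdiff] at h1 h2 ⊢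
  have hθ2 : (i2, j1) ∈ θ := hrect h1.1 h2.1 hi hj
  refine ⟨hθ2, fun hmem => ?_⟩
  obtain ⟨k, hkN, hfk⟩ := mem_ribbon D.hfim hmem
  rcases eq_or_lt_of_le hj with he | hlt
  · exact h2.2 (he ▸ hmem)
  · -- j1 < j2
    have hctk : ct (D.f k) = ct D.o + k := by rw [ct_f D.hfs _ hkN, D.hf0]
    rw [hfk] at hctk
    have hmax := D.hmax _ h2.1
    set k'' := (ct (i2, j2) - ct D.o).toNat with hk''def
    have hk''eq : (k'' : ℤ) = ct (i2, j2) - ct D.o := by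
      apply Int.toNat_of_nonneg
      simp only [ct] at hctk ⊢; omega
    have hkk'' : k < k'' := by
      simp only [ct] at hctk hk''eq; omega
    have hk''N : k'' < N := by
      simp only [ct] at hmax hk''eq; omega
    have hl := maxrib_lowest hN hrect hcontig hT D k'' hk''N (i2, j2) h2.1 (by omega)
    have hm := (f_mono D.hfs (le_of_lt hkk'') hk''N).1
    have hctk'' : ct (D.f k'') = ct D.o + k'' := by rw [ct_f D.hfs _ hk''N, D.hf0]
    have hy : (i2, j2) = D.f k'' :=
      eq_of_ct_row (by omega) (by rw [hfk] at hm; simpa using le_antisymm hl hm)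
    exact h2.2 (hy ▸ ribbon_mem D.hfim hk''N)

lemma tiling_erase {N : ℕ} (hN : 0 < N) {θ : Finset (ℕ × ℕ)}
    {T : Finset (Finset (ℕ × ℕ))} (hT : IsHorizontalRibbonTiling N θ T)
    (D : MaxRib N θ T) :
    IsHorizontalRibbonTiling N (θ \ D.R) (T.erase D.R) := by
  refine ⟨?_, ?_, ?_⟩
  · intro R' hR'
    have hR'T := Finset.mem_of_mem_erase hR'
    have hne := Finset.ne_of_mem_erase hR'
    obtain ⟨o', hrib, ho'θ, hbot'⟩ := hT.1 R' hR'T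
    obtain ⟨f', hf0', hfim', hcard', hfs'⟩ := hrib
    have ho'R' : o' ∈ R' := hf0' ▸ ribbon_mem hfim' hN
    have hdisj := hT.2.1 R' hR'T D.R D.hR hne
    refine ⟨o', ⟨f', hf0', hfim', hcard', hfs'⟩, ?_, ?_⟩
    · rw [Finset.mem_sdiff]
      exact ⟨ho'θ, fun h => Finset.disjoint_left.mp hdisj ho'R' h⟩
    · rw [Finset.mem_sdiff]
      tauto
  · intro R hR R' hR' hne
    exact hT.2.1 R (Finset.mem_of_mem_erase hR) R' (Finset.mem_of_mem_erase hR') hne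
  · ext x
    rw [Finset.mem_sup, Finset.mem_sdiff]
    constructor
    · rintro ⟨R', hR', hx⟩
      have hR'T := Finset.mem_of_mem_erase hR'
      have hne := Finset.ne_of_mem_erase hR'
      refine ⟨tile_subset hT hR'T hx, fun h => ?_⟩
      exact Finset.disjoint_left.mp (hT.2.1 R' hR'T D.R D.hR hne) hx h
    · rintro ⟨hxθ, hxR⟩
      obtain ⟨R', hR', hx⟩ := tile_cover hT hxθ
      have hne : R' ≠ D.R := fun he => hxR (he ▸ hx)
      exact ⟨R', Finset.mem_erase.mpr ⟨hne, hR'⟩, hx⟩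


theorem main_aux (N : ℕ) (hN : 0 < N) :
    ∀ (k : ℕ) (θ : Finset (ℕ × ℕ)), RectClosed θ → ColContig θ →
      ∀ T₁ T₂ : Finset (Finset (ℕ × ℕ)), IsHorizontalRibbonTiling N θ T₁ → T₁.card = k →
        IsHorizontalRibbonTiling N θ T₂ → T₂.card = k → T₁ = T₂ := by
  intro k
  induction k with
  | zero =>
    intro θ _ _ T₁ T₂ _ h1 _ h2
    rw [Finset.card_eq_zero] at h1 h2
    rw [h1, h2]
  | succ n ih =>
    intro θ hrect hcontig T₁ T₂ hT₁ hc₁ hT₂ hc₂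
    have hθne : θ.Nonempty := by
      obtain ⟨R, hR⟩ := Finset.card_pos.mp (show 0 < T₁.card by omega)
      obtain ⟨o, _, hoθ, _⟩ := hT₁.1 R hR
      exact ⟨o, hoθ⟩
    obtain ⟨D₁⟩ := exists_maxrib hN hT₁ hθne
    obtain ⟨D₂⟩ := exists_maxrib hN hT₂ hθne
    have hReq : D₁.R = D₂.R := maxrib_eq hN hrect hcontig hT₁ hT₂ D₁ D₂
    have h1' := tiling_erase hN hT₁ D₁
    have h2' := tiling_erase hN hT₂ D₂
    rw [hReq] at h1'
    have heq := ih (θ \ D₂.R) (rect_sdiff hN hrect hcontig hT₂ D₂)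
      (contig_sdiff hN hrect hcontig hT₂ D₂)
      (T₁.erase D₂.R) (T₂.erase D₂.R) h1'
      (by rw [Finset.card_erase_of_mem (hReq ▸ D₁.hR), hc₁]; omega)
      h2'
      (by rw [Finset.card_erase_of_mem D₂.hR, hc₂]; omega)
    have e1 : insert D₂.R (T₁.erase D₂.R) = T₁ := Finset.insert_erase (hReq ▸ D₁.hR)
    have e2 : insert D₂.R (T₂.erase D₂.R) = T₂ := Finset.insert_erase D₂.hR
    rw [← e1, heq]
    exact e2

end RibbonAux


/-- Uniqueness of the tiling of a horizontal `N`-ribbon strip: if the skew diagram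
`θ = μ \ λ` admits tilings by `k` ribbons of length `N` with origins in `θ↓`, then any two
such tilings are equal. -/
theorem horizontal_ribbon_tiling_unique (lam mu : YoungDiagram) (hsub : lam.cells ⊆ mu.cells)
    (N k : ℕ) (hN : 0 < N)
    (T₁ T₂ : Finset (Finset (ℕ × ℕ)))
    (h₁ : IsHorizontalRibbonTiling N (mu.cells \ lam.cells) T₁) (hk₁ : T₁.card = k)
    (h₂ : IsHorizontalRibbonTiling N (mu.cells \ lam.cells) T₂) (hk₂ : T₂.card = k) :
    T₁ = T₂ := by
  apply RibbonAux.main_aux N hN k (mu.cells \ lam.cells) ?_ ?_ T₁ T₂ h₁ hk₁ h₂ hk₂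
  · intro i1 j1 i2 j2 h1 h2 hi hj
    rw [Finset.mem_sdiff] at h1 h2 ⊢
    constructor
    · exact mu.isLowerSet (show ((i2, j1) : ℕ × ℕ) ≤ (i2, j2) from ⟨le_rfl, hj⟩) h2.1
    · intro hl
      exact h1.2 (lam.isLowerSet (show ((i1, j1) : ℕ × ℕ) ≤ (i2, j1) from ⟨hi, le_rfl⟩) hl)
  · intro i m i' j h1 h2 him hmi'
    rw [Finset.mem_sdiff] at h1 h2 ⊢
    constructor
    · exact mu.isLowerSet (show ((m, j) : ℕ × ℕ) ≤ (i', j) from ⟨hmi', le_rfl⟩) h2.1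
    · intro hl
      exact h1.2 (lam.isLowerSet (show ((i, j) : ℕ × ℕ) ≤ (m, j) from ⟨him, le_rfl⟩) hl)
end

section
/- Let A(q) be a square matrix over ℤ[q, q^{−1}], unitriangular with respect to a partial order (A_{λλ} = 1 and A_{λμ} = 0 unless λ ⊴ μ in the order, possibly λ = μ), such that A(q)·A(q^{−1}) = Id (it represents an involution). Then there exists a unique matrix Δ(q), unitriangular with off-diagonal entries in qℤ[q], such that A(q)·Δ(q^{−1}) = Δ(q), i.e., the columns of Δ(q) are bar-invariant and congruent to the standard basis modulo qL where L is the ℤ[q]-lattice spanned by the standard basis. -/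
/-!
Write `A = 1 + N` with `N` strictly upper triangular and `x̄` for the bar involution. Row `l` of
`A Δ̄ = Δ` reads `Δ_lμ - Δ̄_lμ = r_lμ`, where `r = N Δ̄` only involves the rows `j > l` of `Δ`.
Once those rows solve the equation, `Ā A = 1` forces `r̄_lμ = -r_lμ`, so `r_lμ = f - f̄` for its
positive part `f ∈ qℤ[q]`; and `f` is the only solution in `qℤ[q]`, because a bar-invariant
element of `qℤ[q]` vanishes. Descending induction along the order gives existence and uniqueness.
-/

open LaurentPolynomial Polynomial

namespace LaurentPolynomial

variable {R : Type*}

section Semiring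

variable [Semiring R]

theorem coeff_toLaurent_natCast (p : R[X]) (n : ℕ) : (toLaurent p).coeff n = p.coeff n := by
  rw [coeff_toLaurent]
  exact Finsupp.mapDomain_apply Nat.castEmbedding.injective _ n

theorem coeff_toLaurent_of_neg (p : R[X]) {n : ℤ} (hn : n < 0) : (toLaurent p).coeff n = 0 := by
  rw [coeff_toLaurent]
  exact Finsupp.mapDomain_of_notMem_range _ _ (by simp; omega)

theorem coeff_T_mul (f : R[T;T⁻¹]) (m n : ℤ) : (T m * f).coeff n = f.coeff (n - m) := by
  rw [T, AddMonoidAlgebra.coeff_single_mul_apply, one_mul, neg_add_eq_sub]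

theorem coeff_toLaurent_trunc (f : R[T;T⁻¹]) (n : ℤ) :
    (toLaurent (trunc f)).coeff n = if 0 ≤ n then f.coeff n else 0 := by
  split_ifs with hn
  · lift n to ℕ using hn
    rw [coeff_toLaurent_natCast]
    simp [trunc]
  · exact coeff_toLaurent_of_neg _ (not_le.mp hn)

theorem coeff_toLaurent_X_mul_of_nonpos (g : R[X]) {n : ℤ} (hn : n ≤ 0) :
    (toLaurent (X * g)).coeff n = 0 := by
  rw [map_mul, Polynomial.toLaurent_X, coeff_T_mul]
  exact coeff_toLaurent_of_neg _ (by omega)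

/-- The terms of positive degree of `f`, written so that it is visibly in `q R[q]`. -/
noncomputable def positivePart (f : R[T;T⁻¹]) : R[T;T⁻¹] :=
  toLaurent (X * trunc (T (-1) * f))

theorem coeff_positivePart (f : R[T;T⁻¹]) (n : ℤ) :
    (positivePart f).coeff n = if 0 < n then f.coeff n else 0 := by
  rw [positivePart, map_mul, Polynomial.toLaurent_X, coeff_T_mul, coeff_toLaurent_trunc,
    coeff_T_mul]
  simp only [sub_nonneg, sub_neg_eq_add, sub_add_cancel, Order.one_le_iff_pos]

@[simp]
theorem positivePart_zero : positivePart (0 : R[T;T⁻¹]) = 0 := by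
  simp [positivePart]

end Semiring

section CommRing

variable [CommRing R]

theorem positivePart_sub_invert [IsAddTorsionFree R] {r : R[T;T⁻¹]} (hr : invert r = -r) :
    positivePart r - invert (positivePart r) = r := by
  have hodd (n : ℤ) : r.coeff (-n) = -r.coeff n := by
    simpa using congr_arg (fun f => f.coeff n) hr
  ext n
  simp only [AddMonoidAlgebra.coeff_sub, Finsupp.sub_apply, invert_apply, coeff_positivePart]
  rcases lt_trichotomy n 0 with hn | rfl | hn
  · simp [hn.not_gt, hn, ← hodd]
  · simpa using (self_eq_neg.mp (by simpa using hodd 0)).symm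
  · simp [hn, hn.not_gt]

theorem toLaurent_X_mul_eq_zero_of_invert_eq {g : R[X]}
    (h : invert (toLaurent (X * g)) = toLaurent (X * g)) : toLaurent (X * g) = 0 := by
  ext n
  rcases le_or_gt n 0 with hn | hn
  · exact coeff_toLaurent_X_mul_of_nonpos g hn
  · rw [← h, invert_apply]
    exact coeff_toLaurent_X_mul_of_nonpos g (by omega)

end CommRing

theorem ringHom_eq_invert (φ : ℤ[T;T⁻¹] →+* ℤ[T;T⁻¹]) (hφ : ∀ n, φ (T n) = T (-n)) :
    ⇑φ = ⇑invert := by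
  funext f
  induction f using LaurentPolynomial.induction_on' with
  | add p q hp hq => rw [map_add, map_add, hp, hq]
  | C_mul_T n a =>
    rw [map_mul, map_mul, hφ, invert_T, invert_C, eq_intCast C a, map_intCast]

end LaurentPolynomial

namespace Matrix

variable {I S : Type*}

theorem mul_apply_eq_add_sub_one_mul_apply [Fintype I] [DecidableEq I] [Ring S]
    (B N : Matrix I I S) (i j : I) : (B * N) i j = N i j + ((B - 1) * N) i j := by
  rw [sub_one_mul, sub_apply, add_sub_cancel]

variable [PartialOrder I]

def IsUnitriangular [Zero S] [One S] (A : Matrix I I S) : Prop :=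
  (∀ i, A i i = 1) ∧ ∀ i j, A i j ≠ 0 → i ≤ j

theorem IsUnitriangular.map {S' : Type*} [Semiring S] [Semiring S'] {A : Matrix I I S}
    (hA : A.IsUnitriangular) (f : S →+* S') : (A.map f).IsUnitriangular :=
  ⟨fun i => by simp [hA.1 i], fun i j h => hA.2 i j fun h0 => h (by simp [h0])⟩

theorem IsUnitriangular.sub_one_apply_ne_zero [DecidableEq I] [Ring S] {A : Matrix I I S}
    (hA : A.IsUnitriangular) {i j : I} (h : (A - 1) i j ≠ 0) : i < j := by
  obtain rfl | hij := eq_or_ne i j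
  · simp [hA.1] at h
  · exact (hA.2 i j (by simpa [hij] using h)).lt_of_ne hij

theorem mul_apply_congr_of_lt [Fintype I] [Semiring S] {N M M' : Matrix I I S} {l μ : I}
    (hN : ∀ j, N l j ≠ 0 → l < j) (h : ∀ j, l < j → M j μ = M' j μ) :
    (N * M) l μ = (N * M') l μ := by
  simp only [mul_apply]
  refine Finset.sum_congr rfl fun j _ => ?_
  by_cases hj : N l j = 0
  · simp [hj]
  · rw [h j (hN j hj)]

end Matrix

open Matrix

namespace LaurentPolynomial

variable {R : Type*} [CommRing R] {I : Type*} [Fintype I] [DecidableEq I]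

theorem map_invert_sub_one_mul_map_invert (A M : Matrix I I R[T;T⁻¹]) :
    ((A - 1) * M.map invert).map invert = (A.map invert - 1) * M := by
  rw [Matrix.map_mul, Matrix.map_map, involutive_invert.comp_self, Matrix.map_id,
    Matrix.map_sub _ (map_sub invert), Matrix.map_one _ (map_zero invert) (map_one invert)]

variable [PartialOrder I]

theorem invert_sub_one_mul_map_invert_apply_eq_neg {A M : Matrix I I R[T;T⁻¹]}
    (hA : A.IsUnitriangular) (hinv : A * A.map invert = 1) {l : I}
    (hM : ∀ j, l < j → (A * M.map invert) j = M j) (μ : I) :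
    invert (((A - 1) * M.map invert) l μ) = -(((A - 1) * M.map invert) l μ) := by
  set W := A * M.map invert
  have hW : W l μ = invert (M l μ) + ((A - 1) * M.map invert) l μ :=
    mul_apply_eq_add_sub_one_mul_apply A (M.map invert) l μ
  have hleft : (A.map invert * W) l μ = invert (M l μ) := by
    rw [← mul_assoc, mul_eq_one_comm.mp hinv, one_mul, map_apply]
  have hrow : ((A.map invert - 1) * W) l μ = ((A.map invert - 1) * M) l μ :=
    mul_apply_congr_of_lt (fun j => (hA.map invert.toRingHom).sub_one_apply_ne_zero)
      fun j hj => by rw [hM j hj]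
  have hbar : ((A.map invert - 1) * M) l μ = invert (((A - 1) * M.map invert) l μ) := by
    rw [← map_invert_sub_one_mul_map_invert, map_apply]
  have := mul_apply_eq_add_sub_one_mul_apply (A.map invert) W l μ
  rw [hleft, hW, hrow, hbar] at this
  linear_combination -this

theorem eq_zero_of_mul_map_invert_eq_self {A E : Matrix I I R[T;T⁻¹]} (hA : A.IsUnitriangular)
    (hE : ∀ i j, ∃ g : R[X], E i j = toLaurent (X * g)) (hfix : A * E.map invert = E) :
    E = 0 := by
  suffices ∀ l, E l = 0 from funext this
  intro l
  induction l using WellFoundedGT.induction with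
  | _ l ih =>
  funext μ
  have hr : ((A - 1) * E.map invert) l μ = 0 := by
    simpa using mul_apply_congr_of_lt (M' := 0) (fun j => hA.sub_one_apply_ne_zero)
      fun j hj => by simp [ih j hj]
  have hfixed : invert (E l μ) = E l μ := by
    simpa [mul_apply_eq_add_sub_one_mul_apply, hr] using congr_fun₂ hfix l μ
  obtain ⟨g, hg⟩ := hE l μ
  rw [hg] at hfixed ⊢
  exact toLaurent_X_mul_eq_zero_of_invert_eq hfixed

theorem eq_of_mul_map_invert_eq_self {A Δ Δ' : Matrix I I R[T;T⁻¹]} (hA : A.IsUnitriangular)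
    (hΔ : ∀ i, Δ i i = 1) (hΔ' : ∀ i, Δ' i i = 1)
    (hlat : ∀ i j, i ≠ j → ∃ g : R[X], Δ i j = toLaurent (X * g))
    (hlat' : ∀ i j, i ≠ j → ∃ g : R[X], Δ' i j = toLaurent (X * g))
    (hfix : A * Δ.map invert = Δ) (hfix' : A * Δ'.map invert = Δ') : Δ = Δ' := by
  refine sub_eq_zero.mp (eq_zero_of_mul_map_invert_eq_self hA (fun i j => ?_) ?_)
  · obtain rfl | hij := eq_or_ne i j
    · exact ⟨0, by simp [hΔ, hΔ']⟩
    · obtain ⟨g, hg⟩ := hlat i j hij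
      obtain ⟨g', hg'⟩ := hlat' i j hij
      exact ⟨g - g', by simp [hg, hg', mul_sub]⟩
  · rw [Matrix.map_sub _ (map_sub invert), mul_sub, hfix, hfix']

open scoped Classical in
/-- Row `l` is computed from the rows `j > l`: off the diagonal, its entries are the positive
parts of those of `(A - 1) * Δ̄`. -/
noncomputable def canonicalBasisMatrix (A : Matrix I I R[T;T⁻¹]) : Matrix I I R[T;T⁻¹] :=
  WellFoundedGT.fix (motive := fun _ => I → R[T;T⁻¹]) fun l below μ =>
    if l = μ then 1 else
      positivePart (∑ j, if hlj : l < j then A l j * invert (below j hlj μ) else 0)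

theorem canonicalBasisMatrix_apply {A : Matrix I I R[T;T⁻¹]} (hA : A.IsUnitriangular) (l μ : I) :
    canonicalBasisMatrix A l μ = if l = μ then 1 else
      positivePart (((A - 1) * (canonicalBasisMatrix A).map invert) l μ) := by
  conv_lhs => rw [canonicalBasisMatrix, WellFoundedGT.fix_eq]
  rw [mul_apply]
  congr 2
  refine Finset.sum_congr rfl fun j _ => ?_
  split_ifs with hlj
  · rw [Matrix.sub_apply, one_apply_ne hlj.ne, sub_zero, map_apply]
    rfl
  · rw [not_ne_iff.mp (mt hA.sub_one_apply_ne_zero hlj), zero_mul]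

theorem canonicalBasisMatrix_apply_of_not_le {A : Matrix I I R[T;T⁻¹]} (hA : A.IsUnitriangular)
    {l μ : I} (hlμ : ¬l ≤ μ) : canonicalBasisMatrix A l μ = 0 := by
  induction l using WellFoundedGT.induction with
  | _ l ih =>
  have hr : ((A - 1) * (canonicalBasisMatrix A).map invert) l μ = 0 := by
    simpa using mul_apply_congr_of_lt (M' := 0) (fun j => hA.sub_one_apply_ne_zero)
      fun j hj => by simp [ih j hj fun hjμ => hlμ (hj.le.trans hjμ)]
  rw [canonicalBasisMatrix_apply hA, if_neg (ne_of_not_le hlμ), hr, positivePart_zero]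

theorem isUnitriangular_canonicalBasisMatrix {A : Matrix I I R[T;T⁻¹]} (hA : A.IsUnitriangular) :
    (canonicalBasisMatrix A).IsUnitriangular :=
  ⟨fun i => by rw [canonicalBasisMatrix_apply hA, if_pos rfl],
    fun _ _ h => not_not.mp (mt (canonicalBasisMatrix_apply_of_not_le hA) h)⟩

theorem exists_canonicalBasisMatrix_apply_eq_toLaurent {A : Matrix I I R[T;T⁻¹]}
    (hA : A.IsUnitriangular) {l μ : I} (hlμ : l ≠ μ) : ∃ g : R[X], canonicalBasisMatrix A l μ = toLaurent (X * g) :=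
  ⟨_, by rw [canonicalBasisMatrix_apply hA, if_neg hlμ]; rfl⟩

theorem mul_map_invert_canonicalBasisMatrix [IsAddTorsionFree R] {A : Matrix I I R[T;T⁻¹]}
    (hA : A.IsUnitriangular) (hinv : A * A.map invert = 1) :
    A * (canonicalBasisMatrix A).map invert = canonicalBasisMatrix A := by
  suffices ∀ l, (A * (canonicalBasisMatrix A).map invert) l = canonicalBasisMatrix A l from
    funext this
  intro l
  induction l using WellFoundedGT.induction with
  | _ l ih =>
  funext μ
  rw [mul_apply_eq_add_sub_one_mul_apply, map_apply]
  obtain rfl | hlμ := eq_or_ne l μ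
  · have hr : ((A - 1) * (canonicalBasisMatrix A).map invert) l l = 0 := by
      simpa using mul_apply_congr_of_lt (M' := 0) (fun j => hA.sub_one_apply_ne_zero)
        fun j hj => by simp [canonicalBasisMatrix_apply_of_not_le hA hj.not_ge]
    rw [hr, (isUnitriangular_canonicalBasisMatrix hA).1, map_one, add_zero]
  · have hanti := invert_sub_one_mul_map_invert_apply_eq_neg hA hinv ih μ
    rw [canonicalBasisMatrix_apply hA l μ, if_neg hlμ]
    linear_combination -positivePart_sub_invert hanti

end LaurentPolynomial

/-- Kazhdan–Lusztig-type existence and uniqueness: if `A(q)` is a unitriangular matrix over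
`ℤ[q,q⁻¹]` with `A(q)·A(q⁻¹) = 1` (`bar` being the substitution `q ↦ q⁻¹`), then there is a
unique unitriangular matrix `Δ(q)` with off-diagonal entries in `qℤ[q]` such that
`A(q)·Δ(q⁻¹) = Δ(q)`. -/
theorem canonical_basis_matrix_exists_unique
    {I : Type*} [Fintype I] [DecidableEq I] [PartialOrder I]
    (bar : LaurentPolynomial ℤ ≃+* LaurentPolynomial ℤ)
    (hbar : ∀ k : ℤ, bar (T k) = T (-k))
    (A : Matrix I I (LaurentPolynomial ℤ))
    (hAdiag : ∀ i, A i i = 1)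
    (hAtri : ∀ i j, A i j ≠ 0 → i ≤ j)
    (hAinv : A * A.map bar = 1) :
    ∃! Δ : Matrix I I (LaurentPolynomial ℤ),
      (∀ i, Δ i i = 1) ∧
      (∀ i j, Δ i j ≠ 0 → i ≤ j) ∧
      (∀ i j, i ≠ j → ∃ g : Polynomial ℤ, Δ i j = Polynomial.toLaurent (Polynomial.X * g)) ∧
      A * Δ.map bar = Δ := by
  have hA : A.IsUnitriangular := ⟨hAdiag, hAtri⟩
  rw [show ⇑bar = ⇑invert from ringHom_eq_invert bar.toRingHom hbar] at hAinv ⊢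
  have hΔ := isUnitriangular_canonicalBasisMatrix hA
  have hlat : ∀ i j, i ≠ j → ∃ g : ℤ[X], canonicalBasisMatrix A i j = toLaurent (X * g) :=
    fun _ _ => exists_canonicalBasisMatrix_apply_eq_toLaurent hA
  have hfix := mul_map_invert_canonicalBasisMatrix hA hAinv
  refine ⟨canonicalBasisMatrix A, ⟨hΔ.1, hΔ.2, hlat, hfix⟩, ?_⟩
  rintro Δ ⟨hdiag, -, hlat', hfix'⟩
  exact eq_of_mul_map_invert_eq_self hA hdiag hΔ.1 hlat' hlat hfix' hfix
end
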